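/- For a Horn PCL formula p with no standard implications (only conjunctions of atoms and contractual implications ↠ with atomic conclusions): p ⊢ λ(p) is derivable if and only if the contract automaton ⟦p⟧ admits weak agreement, where λ(p) is the conjunction of all atoms occurring in p. -/

import Mathlib

/-- Formulae of Propositional Contract Logic: atoms, ⊥, ⊤, ¬, ∧, ∨, →, and the
contractual implication ↠ (`cimp`). -/
inductive PCLForm where
  | atom : ℕ → PCLForm
  | bot : PCLForm
  | top : PCLForm
  | neg : PCLForm → PCLForm
  | conj : PCLForm → PCLForm → PCLForm
  | disj : PCLForm → PCLForm → PCLForm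
  | imp : PCLForm → PCLForm → PCLForm
  | cimp : PCLForm → PCLForm → PCLForm
deriving DecidableEq

/-- Cut-free (and weakR-free) sequent calculus for PCL over multiset contexts:
the standard intuitionistic rules plus Zero, Fix, PrePost for ↠. -/
inductive Der : Multiset PCLForm → PCLForm → Prop where
  | id (Γ p) : Der (p ::ₘ Γ) p
  | andL1 {Γ p q c} : Der (p ::ₘ (PCLForm.conj p q) ::ₘ Γ) c →
      Der ((PCLForm.conj p q) ::ₘ Γ) c
  | andL2 {Γ p q c} : Der (q ::ₘ (PCLForm.conj p q) ::ₘ Γ) c →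
      Der ((PCLForm.conj p q) ::ₘ Γ) c
  | andR {Γ p q} : Der Γ p → Der Γ q → Der Γ (PCLForm.conj p q)
  | orL {Γ p q c} : Der (p ::ₘ (PCLForm.disj p q) ::ₘ Γ) c →
      Der (q ::ₘ (PCLForm.disj p q) ::ₘ Γ) c → Der ((PCLForm.disj p q) ::ₘ Γ) c
  | orR1 {Γ p q} : Der Γ p → Der Γ (PCLForm.disj p q)
  | orR2 {Γ p q} : Der Γ q → Der Γ (PCLForm.disj p q)
  | impL {Γ p q c} : Der ((PCLForm.imp p q) ::ₘ Γ) p →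
      Der (q ::ₘ (PCLForm.imp p q) ::ₘ Γ) c → Der ((PCLForm.imp p q) ::ₘ Γ) c
  | impR {Γ p q} : Der (p ::ₘ Γ) q → Der Γ (PCLForm.imp p q)
  | negL {Γ p c} : Der ((PCLForm.neg p) ::ₘ Γ) p → Der ((PCLForm.neg p) ::ₘ Γ) c
  | negR {Γ p} : Der (p ::ₘ Γ) PCLForm.bot → Der Γ (PCLForm.neg p)
  | botL (Γ p) : Der (PCLForm.bot ::ₘ Γ) p
  | topR (Γ) : Der Γ PCLForm.top
  | zero {Γ p q} : Der Γ q → Der Γ (PCLForm.cimp p q)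
  | fix {Γ p q c} : Der (c ::ₘ (PCLForm.cimp p q) ::ₘ Γ) p →
      Der (q ::ₘ (PCLForm.cimp p q) ::ₘ Γ) c → Der ((PCLForm.cimp p q) ::ₘ Γ) c
  | prepost {Γ p q a b} : Der (a ::ₘ (PCLForm.cimp p q) ::ₘ Γ) p →
      Der (q ::ₘ (PCLForm.cimp p q) ::ₘ Γ) b →
      Der ((PCLForm.cimp p q) ::ₘ Γ) (PCLForm.cimp a b)

/-- Clauses of Horn PCL without standard implication: either a (nonempty)
conjunction of atoms, or a contractual implication `(⋀_{j∈J} a_j) ↠ b`. -/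
inductive HClause where
  | conj : List ℕ → HClause
  | cimp : List ℕ → ℕ → HClause
deriving DecidableEq

def atomsOfClause : HClause → List ℕ
  | .conj xs => xs
  | .cimp ys b => ys ++ [b]

/-- The conjunction of a list of atoms (right-associated). -/
def conjAtoms : List ℕ → PCLForm
  | [] => .top
  | [a] => .atom a
  | a :: as => .conj (.atom a) (conjAtoms as)

/-- The PCL formula denoted by a clause. -/
def clauseForm : HClause → PCLForm
  | .conj xs => conjAtoms xs
  | .cimp ys b => .cimp (conjAtoms ys) (.atom b)

/-- The conjunction of a list of formulae (right-associated). -/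
def conjForms : List PCLForm → PCLForm
  | [] => .top
  | [f] => f
  | f :: fs => .conj f (conjForms fs)

/-- The PCL formula `p = ⋀_{i∈I} α_i` denoted by a list of clauses. -/
def hpclForm (p : List HClause) : PCLForm := conjForms (p.map clauseForm)

/-- `λ(p)`: the conjunction of all the atoms occurring in `p`. -/
def lambdaOf (p : List HClause) : PCLForm :=
  conjAtoms (p.flatMap atomsOfClause).dedup

/-- Well-formedness of a clause: the atoms are nonempty and pairwise distinct,
and the conclusion of a contractual implication differs from its premises. -/
def WFClause : HClause → Prop
  | .conj xs => xs ≠ [] ∧ xs.Nodup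
  | .cimp ys b => ys ≠ [] ∧ ys.Nodup ∧ b ∉ ys

/-- The number of requests on atom `a` that the `i`-th clause automaton fires
in any of its accepted traces: a conjunction fires none; the automaton of a
contractual implication consumes each premise exactly once. -/
def reqCount (p : List HClause) (i : Fin p.length) (a : ℕ) : ℕ :=
  match p.get i with
  | .conj _ => 0
  | .cimp ys _ => ys.count a

/-- Whether the `i`-th clause automaton can fire an offer on atom `a`: a
conjunction offers each of its atoms (any number of times), while a
contractual implication offers only its conclusion (at any state, any number
of times). -/
def CanOffer : HClause → ℕ → Prop
  | .conj xs, a => a ∈ xs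
  | .cimp _ b, a => a = b

/-- The composed contract automaton `⟦p⟧` admits weak agreement: some accepted
trace has, for every atom, at least as many offers as requests.  Accepted
traces are interleavings (with matches, which preserve the counts) of accepted
traces of the clause automata, so this amounts to choosing, for each clause, a
number `off i a` of offers on each atom `a` it can offer, such that the total
offers of each atom dominate its total requests. -/
def AdmitsWeakAgreement (p : List HClause) : Prop :=
  ∃ off : Fin p.length → ℕ → ℕ,
    (∀ i a, off i a ≠ 0 → CanOffer (p.get i) a) ∧
    ∀ a : ℕ, (∑ i : Fin p.length, reqCount p i a) ≤ ∑ i : Fin p.length, off i a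

/-!
Both sides say that every atom requested by a contractual implication is offered by some
clause: for weak agreement this is immediate, as a clause may offer an atom arbitrarily often.
If a requested atom `a` is offered nowhere, the valuation making only `a` false satisfies `p`
but not `λ(p)`, which refutes `p ⊢ λ(p)` since the calculus is sound for truth tables reading
`q ↠ r` as `r`. Conversely every offered atom is derivable: a conjunction yields its atoms
directly, and for `(⋀ a_j) ↠ b` the rule Fix lets us assume `b` while deriving the `a_j`,
which terminates because each use of Fix adds a new atom of `p` to the context.
-/

def evalPCL (v : ℕ → Prop) : PCLForm → Prop
  | .atom a => v a
  | .bot => False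
  | .top => True
  | .neg q => ¬ evalPCL v q
  | .conj q r => evalPCL v q ∧ evalPCL v r
  | .disj q r => evalPCL v q ∨ evalPCL v r
  | .imp q r => evalPCL v q → evalPCL v r
  | .cimp _ r => evalPCL v r

theorem Der.sound {Γ : Multiset PCLForm} {c : PCLForm} (h : Der Γ c) (v : ℕ → Prop)
    (hΓ : ∀ g ∈ Γ, evalPCL v g) : evalPCL v c := by
  induction h <;> simp_all only [evalPCL, Multiset.mem_cons, forall_eq_or_imp] <;> tauto

theorem Der.add_left {Γ : Multiset PCLForm} {c : PCLForm} (h : Der Γ c)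
    (Δ : Multiset PCLForm) : Der (Δ + Γ) c := by
  induction h with (try simp only [Multiset.add_cons] at *)
  | id => exact .id _ _
  | andL1 _ ih => exact .andL1 ih
  | andL2 _ ih => exact .andL2 ih
  | andR _ _ ih₁ ih₂ => exact .andR ih₁ ih₂
  | orL _ _ ih₁ ih₂ => exact .orL ih₁ ih₂
  | orR1 _ ih => exact .orR1 ih
  | orR2 _ ih => exact .orR2 ih
  | impL _ _ ih₁ ih₂ => exact .impL ih₁ ih₂
  | impR _ ih => exact .impR ih
  | negL _ ih => exact .negL ih
  | negR _ ih => exact .negR ih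
  | botL => exact .botL _ _
  | topR => exact .topR _
  | zero _ ih => exact .zero ih
  | fix _ _ ih₁ ih₂ => exact .fix ih₁ ih₂
  | prepost _ _ ih₁ ih₂ => exact .prepost ih₁ ih₂

theorem Der.mono {Γ Γ' : Multiset PCLForm} {c : PCLForm} (h : Der Γ c) (hle : Γ ≤ Γ') :
    Der Γ' c := by
  obtain ⟨Δ, rfl⟩ := Multiset.le_iff_exists_add.mp hle
  simpa only [add_comm] using h.add_left Δ

theorem Der.of_mem {Γ : Multiset PCLForm} {f : PCLForm} (h : f ∈ Γ) : Der Γ f := by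
  rw [← Multiset.cons_erase h]
  exact .id _ _

theorem Der.conjForms_left : ∀ (L : List PCLForm) {Γ : Multiset PCLForm} {c : PCLForm},
    Der (↑L + Γ) c → Der (conjForms L ::ₘ Γ) c
  | [], _, _, h => h.mono (by simpa using Multiset.le_cons_self _ _)
  | [_], _, _, h => h
  | f :: g :: fs, Γ, c, h => by
    refine .andL1 ?_
    rw [Multiset.cons_swap]
    refine .andL2 (Der.conjForms_left (g :: fs) ?_)
    convert h.add_left {PCLForm.conj f (conjForms (g :: fs))} using 1
    simp only [← Multiset.cons_coe, ← Multiset.singleton_add]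
    abel

theorem Der.conjForms_right : ∀ (L : List PCLForm) {Γ : Multiset PCLForm},
    (∀ f ∈ L, Der Γ f) → Der Γ (conjForms L)
  | [], _, _ => .topR _
  | [f], _, h => h f (by simp)
  | f :: g :: fs, _, h =>
    .andR (h f (by simp)) (Der.conjForms_right (g :: fs) fun x hx => h x (by simp [hx]))

theorem conjAtoms_eq_conjForms : ∀ (xs : List ℕ), conjAtoms xs = conjForms (xs.map .atom)
  | [] | [_] => rfl
  | _ :: b :: rest => congrArg (PCLForm.conj _) (conjAtoms_eq_conjForms (b :: rest))

theorem evalPCL_conjForms (v : ℕ → Prop) :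
    ∀ (L : List PCLForm), evalPCL v (conjForms L) ↔ ∀ f ∈ L, evalPCL v f
  | [] => by simp [conjForms, evalPCL]
  | [f] => by simp [conjForms]
  | f :: g :: fs => by
    simp only [conjForms, evalPCL, evalPCL_conjForms v (g :: fs), List.forall_mem_cons]

theorem evalPCL_conjAtoms (v : ℕ → Prop) (xs : List ℕ) :
    evalPCL v (conjAtoms xs) ↔ ∀ x ∈ xs, v x := by
  simp [conjAtoms_eq_conjForms, evalPCL_conjForms, evalPCL]

def Requests (p : List HClause) (a : ℕ) : Prop := ∃ ys b, HClause.cimp ys b ∈ p ∧ a ∈ ys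

def Offers (p : List HClause) (a : ℕ) : Prop := ∃ c ∈ p, CanOffer c a

theorem reqCount_pos_iff {p : List HClause} {i : Fin p.length} {a : ℕ} :
    0 < reqCount p i a ↔ ∃ ys b, p.get i = .cimp ys b ∧ a ∈ ys := by
  unfold reqCount
  split <;> simp_all

theorem sum_reqCount_pos_iff (p : List HClause) (a : ℕ) :
    0 < ∑ i : Fin p.length, reqCount p i a ↔ Requests p a := by
  simp only [Finset.sum_pos_iff, Finset.mem_univ, true_and, reqCount_pos_iff, Requests,
    List.mem_iff_get]
  grind

theorem admitsWeakAgreement_iff (p : List HClause) :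
    AdmitsWeakAgreement p ↔ ∀ a, Requests p a → Offers p a := by
  classical
  constructor
  · rintro ⟨off, hoff, hsum⟩ a hreq
    have : 0 < ∑ i : Fin p.length, off i a :=
      ((sum_reqCount_pos_iff p a).2 hreq).trans_le (hsum a)
    obtain ⟨i, -, hi⟩ := Finset.sum_pos_iff.1 this
    exact ⟨p.get i, List.get_mem p i, hoff i a hi.ne'⟩
  · intro h
    refine ⟨fun i a => if CanOffer (p.get i) a then ∑ j : Fin p.length, reqCount p j a else 0,
      fun i a hi => by_contra fun hc => hi (if_neg hc), fun a => ?_⟩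
    by_cases hreq : Requests p a
    · obtain ⟨c, hc, hca⟩ := h a hreq
      obtain ⟨j, rfl⟩ := List.mem_iff_get.1 hc
      exact (if_pos hca).symm.le.trans (Finset.single_le_sum
        (f := fun i => if CanOffer (p.get i) a then ∑ j : Fin p.length, reqCount p j a else 0)
        (fun _ _ => Nat.zero_le _) (Finset.mem_univ j))
    · rw [← sum_reqCount_pos_iff, not_lt, Nat.le_zero] at hreq
      simp [hreq]

theorem evalPCL_clauseForm_of_not_canOffer {c : HClause} {a : ℕ} (h : ¬ CanOffer c a) :
    evalPCL (· ≠ a) (clauseForm c) := by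
  cases c with
  | conj xs =>
    rw [clauseForm, evalPCL_conjAtoms]
    rintro x hx rfl
    exact h hx
  | cimp ys b => exact fun hb => h hb.symm

theorem evalPCL_hpclForm (v : ℕ → Prop) (p : List HClause) :
    evalPCL v (hpclForm p) ↔ ∀ c ∈ p, evalPCL v (clauseForm c) := by
  simp [hpclForm, evalPCL_conjForms]

theorem evalPCL_lambdaOf (v : ℕ → Prop) (p : List HClause) :
    evalPCL v (lambdaOf p) ↔ ∀ x ∈ p.flatMap atomsOfClause, v x := by
  simp [lambdaOf, evalPCL_conjAtoms]

theorem offers_of_der_lambdaOf {p : List HClause} (hder : Der {hpclForm p} (lambdaOf p))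
    {a : ℕ} (hreq : Requests p a) : Offers p a := by
  by_contra hno
  obtain ⟨ys, b, hc, ha⟩ := hreq
  have hp : evalPCL (· ≠ a) (hpclForm p) := (evalPCL_hpclForm _ p).2 fun c hc =>
    evalPCL_clauseForm_of_not_canOffer fun hca => hno ⟨c, hc, hca⟩
  have hlam := hder.sound (· ≠ a) (by simpa using hp)
  exact (evalPCL_lambdaOf _ p).1 hlam a
    (List.mem_flatMap.2 ⟨_, hc, by simp [atomsOfClause, ha]⟩) rfl

theorem offers_or_requests_of_mem_atomsOfClause {p : List HClause} {c : HClause} {a : ℕ}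
    (hc : c ∈ p) (ha : a ∈ atomsOfClause c) : Offers p a ∨ Requests p a := by
  cases c with
  | conj xs => exact .inl ⟨_, hc, ha⟩
  | cimp ys b =>
    rcases List.mem_append.1 ha with hy | hb
    · exact .inr ⟨ys, b, hc, hy⟩
    · exact .inl ⟨_, hc, List.mem_singleton.1 hb⟩

theorem card_filter_atom_not_mem_cons_lt {s : Finset ℕ} {Δ : Multiset PCLForm} {a : ℕ}
    (ha : a ∈ s) (haΔ : PCLForm.atom a ∉ Δ) :
    (s.filter fun t => PCLForm.atom t ∉ PCLForm.atom a ::ₘ Δ).card <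
      (s.filter fun t => PCLForm.atom t ∉ Δ).card := by
  refine Finset.card_lt_card ((Finset.ssubset_iff_of_subset ?_).2 ⟨a, ?_, ?_⟩)
  · intro t ht
    simp only [Finset.mem_filter, Multiset.mem_cons, not_or] at ht ⊢
    exact ⟨ht.1, ht.2.2⟩
  · simp [ha, haΔ]
  · simp

theorem der_atom_of_offers {p : List HClause} (hp : ∀ a, Requests p a → Offers p a)
    {Δ : Multiset PCLForm} (hΔ : ∀ c ∈ p, clauseForm c ∈ Δ) {a : ℕ} (ha : Offers p a) :
    Der Δ (.atom a) := by
  by_cases haΔ : PCLForm.atom a ∈ Δ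
  · exact .of_mem haΔ
  obtain ⟨c, hc, hca⟩ := ha
  have hF := hΔ c hc
  cases c with
  | conj xs =>
    rw [clauseForm, conjAtoms_eq_conjForms] at hF
    rw [← Multiset.cons_erase hF]
    exact .conjForms_left _ (.of_mem (by simp [show a ∈ xs from hca]))
  | cimp ys b =>
    obtain rfl : a = b := hca
    rw [clauseForm] at hF
    rw [← Multiset.cons_erase hF]
    refine .fix ?_ (.id _ _)
    rw [Multiset.cons_erase hF, conjAtoms_eq_conjForms]
    refine .conjForms_right _ ?_
    simp only [List.mem_map]
    rintro _ ⟨y, hy, rfl⟩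
    exact der_atom_of_offers hp (fun c hc => Multiset.mem_cons_of_mem (hΔ c hc))
      (hp y ⟨ys, a, hc, hy⟩)
termination_by (((p.flatMap atomsOfClause).toFinset).filter fun t => PCLForm.atom t ∉ Δ).card
decreasing_by
  exact card_filter_atom_not_mem_cons_lt
    (List.mem_toFinset.2 (List.mem_flatMap.2 ⟨_, hc, by simp [atomsOfClause]⟩)) haΔ

theorem der_lambdaOf {p : List HClause} (hp : ∀ a, Requests p a → Offers p a) :
    Der {hpclForm p} (lambdaOf p) := by
  refine Der.conjForms_left _ ?_
  rw [lambdaOf, conjAtoms_eq_conjForms]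
  refine .conjForms_right _ ?_
  simp only [List.mem_map, List.mem_dedup, List.mem_flatMap]
  rintro _ ⟨a, ⟨c, hc, ha⟩, rfl⟩
  exact der_atom_of_offers hp (fun c hc => by simpa using ⟨c, hc, rfl⟩)
    ((offers_or_requests_of_mem_atomsOfClause hc ha).elim id (hp a))

theorem hpcl_provable_iff_weak_agreement_general (p : List HClause) :
    Der {hpclForm p} (lambdaOf p) ↔ AdmitsWeakAgreement p := by
  rw [admitsWeakAgreement_iff]
  exact ⟨fun hder _ => offers_of_der_lambdaOf hder, der_lambdaOf⟩

/-- For a Horn PCL formula `p` with no standard implications, `p ⊢ λ(p)` is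
derivable in (cut-free) PCL if and only if the contract automaton `⟦p⟧`
admits weak agreement. -/
theorem hpcl_provable_iff_weak_agreement (p : List HClause)
    (hlen : 2 ≤ p.length) (hwf : ∀ c ∈ p, WFClause c) :
    Der {hpclForm p} (lambdaOf p) ↔ AdmitsWeakAgreement p :=
  hpcl_provable_iff_weak_agreement_general p
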